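/- For any nontrivial graph G, st_id(G) ≤ δ(G) + 1, where δ(G) is the minimum degree of G. -/

import Mathlib

open SimpleGraph

/-- `S` is an independent dominating set of `G`. -/
def SimpleGraph.IsIndepDomSet {V : Type*} (G : SimpleGraph V) (S : Set V) : Prop :=
  (S.Pairwise fun u v => ¬ G.Adj u v) ∧ ∀ v ∉ S, ∃ u ∈ S, G.Adj v u

/-- The independent domination number `γᵢ(G)`. -/
noncomputable def indepDomNum (V : Type*) [Fintype V] (G : SimpleGraph V) : ℕ :=
  sInf {n | ∃ S : Finset V, G.IsIndepDomSet ↑S ∧ S.card = n}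

/-- The independent domination stability `st_id(G)`: the minimum number of
vertices whose removal changes the independent domination number. -/
noncomputable def idStability (V : Type*) [Fintype V] [DecidableEq V]
    (G : SimpleGraph V) : ℕ :=
  sInf {k | ∃ A : Finset V, A.card = k ∧ A.Nonempty ∧
    indepDomNum _ (G.induce (↑(Aᶜ) : Set V)) ≠ indepDomNum V G}

/-!
Let `v` have minimum degree and let `N` be its open neighbourhood. In `G - N` the vertex `v` is
isolated, so it lies in every independent dominating set of `G - N`, and deleting it from a
minimum one gives `γᵢ(G - N[v]) < γᵢ(G - N)`. So removing `N[v]` (`δ + 1` vertices) or removing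
`N` (`δ` vertices) changes `γᵢ(G)`; if `N = ∅`, then `G - N` is `G` and it must be `N[v]`.
-/

namespace SimpleGraph

variable {V W : Type*}

theorem _root_.Maximal.isIndepDomSet {G : SimpleGraph V} {S : Set V}
    (hS : Maximal G.IsIndepSet S) : G.IsIndepDomSet S := by
  refine ⟨hS.prop, fun v hv => ?_⟩
  by_contra! hnadj
  have hins : G.IsIndepSet (insert v S) :=
    hS.prop.insert fun u hu _ => ⟨hnadj u hu, fun h => hnadj u hu h.symm⟩
  exact hv (hS.mem_of_prop_insert hins)

theorem IsIndepDomSet.image {G : SimpleGraph V} {H : SimpleGraph W} (e : G ≃g H) {S : Set V}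
    (hS : G.IsIndepDomSet S) : H.IsIndepDomSet (e '' S) := by
  refine ⟨?_, fun w hw => ?_⟩
  · rintro _ ⟨u, hu, rfl⟩ _ ⟨v, hv, rfl⟩ hne hadj
    exact hS.1 hu hv (fun h => hne (congrArg e h)) (e.map_adj_iff.1 hadj)
  · obtain ⟨u, hu, hadj⟩ := hS.2 (e.symm w) fun h => hw ⟨_, h, e.apply_symm_apply w⟩
    exact ⟨e u, ⟨u, hu, rfl⟩, by simpa using e.map_adj_iff.2 hadj⟩

section Fintype

variable [Fintype V] [Fintype W]

theorem indepDomNum_le {G : SimpleGraph V} {S : Finset V} (hS : G.IsIndepDomSet S) :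
    indepDomNum V G ≤ S.card :=
  Nat.sInf_le ⟨S, hS, rfl⟩

theorem exists_isIndepDomSet_card_eq (G : SimpleGraph V) :
    ∃ S : Finset V, G.IsIndepDomSet S ∧ S.card = indepDomNum V G := by
  obtain ⟨S, -, hS⟩ := Finite.exists_le_maximal (p := G.IsIndepSet) (a := ∅) (by simp)
  lift S to Finset V using S.toFinite
  exact Nat.sInf_mem (s := {n | ∃ S : Finset V, G.IsIndepDomSet ↑S ∧ S.card = n})
    ⟨S.card, S, hS.isIndepDomSet, rfl⟩

theorem indepDomNum_le_of_iso {G : SimpleGraph V} {H : SimpleGraph W} (e : G ≃g H) :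
    indepDomNum W H ≤ indepDomNum V G := by
  obtain ⟨S, hS, hcard⟩ := exists_isIndepDomSet_card_eq G
  calc indepDomNum W H ≤ (S.map e.toEquiv.toEmbedding).card :=
        indepDomNum_le (by simpa using hS.image e)
    _ = indepDomNum V G := by rw [Finset.card_map, hcard]

theorem indepDomNum_congr {G : SimpleGraph V} {H : SimpleGraph W} (e : G ≃g H) :
    indepDomNum V G = indepDomNum W H :=
  (indepDomNum_le_of_iso e.symm).antisymm (indepDomNum_le_of_iso e)

theorem indepDomNum_induce_of_forall_mem (G : SimpleGraph V) {U : Set V} [Fintype U]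
    (hU : ∀ v, v ∈ U) : indepDomNum U (G.induce U) = indepDomNum V G :=
  indepDomNum_congr { Equiv.subtypeUnivEquiv hU with map_rel_iff' := Iff.rfl }

end Fintype

/-- `T` is an independent dominating set of the induced subgraph `G[U]`, taken as a set of
vertices of `G`. -/
def IsIndepDomSetIn (G : SimpleGraph V) (U : Set V) (T : Finset V) : Prop :=
  ↑T ⊆ U ∧ G.IsIndepSet T ∧ ∀ w ∈ U, w ∉ T → ∃ u ∈ T, G.Adj w u

section Induce

variable {G : SimpleGraph V} {U : Set V} [Fintype U]

theorem IsIndepDomSetIn.indepDomNum_induce_le {T : Finset V} (hT : G.IsIndepDomSetIn U T) :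
    indepDomNum U (G.induce U) ≤ T.card := by
  classical
  obtain ⟨hTU, hind, hdom⟩ := hT
  calc indepDomNum U (G.induce U) ≤ (T.subtype (· ∈ U)).card := by
        refine indepDomNum_le ⟨fun u hu v hv hne => ?_, fun w hw => ?_⟩
        · exact hind (by simpa using hu) (by simpa using hv) (Subtype.coe_ne_coe.2 hne)
        · obtain ⟨u, huT, hadj⟩ := hdom w w.2 (by simpa using hw)
          exact ⟨⟨u, hTU huT⟩, by simpa using huT, hadj⟩
    _ = T.card := by
        rw [Finset.card_subtype, Finset.filter_true_of_mem fun x hx => hTU hx]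

variable (G U) in
theorem exists_isIndepDomSetIn_card_eq :
    ∃ T : Finset V, G.IsIndepDomSetIn U T ∧ T.card = indepDomNum U (G.induce U) := by
  obtain ⟨S, ⟨hind, hdom⟩, hcard⟩ := exists_isIndepDomSet_card_eq (G.induce U)
  refine ⟨S.map (Function.Embedding.subtype _), ⟨?_, ?_, fun w hw hwT => ?_⟩,
    by simpa using hcard⟩
  · simp
  · rintro _ hu _ hv hne
    obtain ⟨u, huS, rfl⟩ := Finset.mem_map.1 hu
    obtain ⟨v, hvS, rfl⟩ := Finset.mem_map.1 hv
    exact hind huS hvS (ne_of_apply_ne _ hne)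
  · obtain ⟨u, huS, hadj⟩ := hdom ⟨w, hw⟩ fun h => hwT (Finset.mem_map_of_mem _ h)
    exact ⟨u, by simpa using huS, hadj⟩

end Induce

theorem indepDomNum_induce_erase_lt [DecidableEq V] {G : SimpleGraph V} {U : Finset V} {v : V}
    (hv : v ∈ U) (hisol : ∀ w ∈ U, ¬ G.Adj v w) :
    indepDomNum _ (G.induce (↑(U.erase v) : Set V)) < indepDomNum _ (G.induce (↑U : Set V)) := by
  obtain ⟨T, ⟨hTU, hind, hdom⟩, hcard⟩ := exists_isIndepDomSetIn_card_eq G (↑U : Set V)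
  have hvT : v ∈ T := by
    by_contra hvT
    obtain ⟨u, huT, hadj⟩ := hdom v hv hvT
    exact hisol u (hTU huT) hadj
  have hT' : G.IsIndepDomSetIn ↑(U.erase v) (T.erase v) := by
    refine ⟨?_, hind.mono (by simp), fun w hw hwT => ?_⟩
    · exact Finset.coe_subset.2 (Finset.erase_subset_erase v (Finset.coe_subset.1 hTU))
    · obtain ⟨hwv, hwU⟩ := Finset.mem_erase.1 hw
      obtain ⟨u, huT, hadj⟩ := hdom w hwU fun h => hwT (Finset.mem_erase.2 ⟨hwv, h⟩)
      exact ⟨u, Finset.mem_erase.2 ⟨fun huv => hisol w hwU (huv ▸ hadj).symm, huT⟩, hadj⟩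
  calc _ ≤ (T.erase v).card := hT'.indepDomNum_induce_le
    _ < T.card := Finset.card_erase_lt_of_mem hvT
    _ = _ := hcard

theorem idStability_le [Fintype V] [DecidableEq V] {G : SimpleGraph V} {A : Finset V}
    (hA : A.Nonempty) (hchange : indepDomNum _ (G.induce (↑(Aᶜ) : Set V)) ≠ indepDomNum V G) :
    idStability V G ≤ A.card :=
  Nat.sInf_le ⟨A, rfl, hA, hchange⟩

end SimpleGraph

/-- For any nontrivial graph `G`, `st_id(G) ≤ δ(G) + 1`. -/
theorem stmt10 {V : Type*} [Fintype V] [DecidableEq V] [Nonempty V]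
    (G : SimpleGraph V) [DecidableRel G.Adj] :
    idStability V G ≤ G.minDegree + 1 := by
  obtain ⟨v, hv⟩ := G.exists_minimal_degree_vertex
  set N := G.neighborFinset v
  have hlt : indepDomNum _ (G.induce (↑((insert v N)ᶜ) : Set V)) <
      indepDomNum _ (G.induce (↑(Nᶜ) : Set V)) := by
    rw [Finset.compl_insert]
    exact indepDomNum_induce_erase_lt (by simp [N]) fun w hw hadj => by simp_all [N]
  by_cases hclosed : indepDomNum _ (G.induce (↑((insert v N)ᶜ) : Set V)) = indepDomNum V G
  · obtain hN | hN := N.eq_empty_or_nonempty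
    · have := G.indepDomNum_induce_of_forall_mem (U := ↑(Nᶜ)) (by simp [hN])
      omega
    calc idStability V G ≤ N.card := idStability_le hN (by omega)
      _ ≤ G.minDegree + 1 := by rw [G.card_neighborFinset_eq_degree, hv]; omega
  · calc idStability V G ≤ (insert v N).card := idStability_le (Finset.insert_nonempty v N) hclosed
      _ = G.minDegree + 1 := by
        rw [Finset.card_insert_of_notMem (by simp [N]), G.card_neighborFinset_eq_degree, hv]
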